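/- Let γ > 0, let x_1, …, x_n ∈ ℝ^d satisfy ‖x_t‖ ≤ L for all t, and define V_t := γ·I + Σ_{s=1}^{t} x_s x_sᵀ for t = 0, 1, …, n. Then Σ_{t=1}^{n} min(1, √(x_tᵀ V_{t-1}⁻¹ x_t)) ≤ √(2 n d log(1 + n·L²/(d·γ))). -/

import Mathlib

/-!
Write `u_t = x_tᵀ V_t⁻¹ x_t`. Each summand satisfies `min 1 √u ≤ √(2 log (1 + u))`, so by
Cauchy–Schwarz the sum is at most `√(2 n Σ_t log (1 + u_t))`. The matrix determinant lemma
gives `det V_{t+1} = det V_t · (1 + u_t)`, so these logarithms telescope to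
`log (det V_n / det V_0)`.
Finally `det V_0 = γ^d`, and AM–GM on the eigenvalues gives
`det V_n ≤ (tr V_n / d)^d ≤ (γ + n L² / d)^d`.
-/

open Matrix Finset Real

theorem Real.prod_le_sum_div_card_pow {ι : Type*} (s : Finset ι) {z : ι → ℝ}
    (hz : ∀ i ∈ s, 0 ≤ z i) : ∏ i ∈ s, z i ≤ ((∑ i ∈ s, z i) / #s) ^ #s := by
  rcases s.eq_empty_or_nonempty with rfl | hs
  · simp
  have hcard : (0 : ℝ) < #s := by exact_mod_cast hs.card_pos
  have hamgm := geom_mean_le_arith_mean_weighted s (fun _ ↦ (#s : ℝ)⁻¹) z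
    (fun _ _ ↦ inv_nonneg.2 hcard.le) (by simp [hcard.ne']) hz
  rw [← mul_sum, inv_mul_eq_div, finsetProd_rpow s z hz] at hamgm
  calc ∏ i ∈ s, z i = ((∏ i ∈ s, z i) ^ (#s : ℝ)⁻¹) ^ #s :=
        (rpow_inv_natCast_pow (prod_nonneg hz) hs.card_pos.ne').symm
    _ ≤ _ := pow_le_pow_left₀ (rpow_nonneg (prod_nonneg hz) _) hamgm _

theorem Matrix.PosSemidef.det_le_trace_div_card_pow {ι : Type*} [Fintype ι] [DecidableEq ι]
    {A : Matrix ι ι ℝ} (hA : A.PosSemidef) :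
    A.det ≤ (A.trace / Fintype.card ι) ^ Fintype.card ι := by
  rw [hA.isHermitian.det_eq_prod_eigenvalues, hA.isHermitian.trace_eq_sum_eigenvalues]
  simpa using prod_le_sum_div_card_pow univ fun i _ ↦ hA.eigenvalues_nonneg i

theorem Matrix.det_add_vecMulVec {R ι : Type*} [CommRing R] [Fintype ι] [DecidableEq ι]
    {A : Matrix ι ι R} (hA : IsUnit A.det) (u v : ι → R) :
    (A + vecMulVec u v).det = A.det * (1 + v ⬝ᵥ A⁻¹ *ᵥ u) := by
  rw [vecMulVec_eq Unit, det_add_replicateCol_mul_replicateRow hA, Matrix.mul_assoc,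
    ← replicateCol_mulVec, det_unique (1 + _)]
  rfl

theorem Matrix.PosSemidef.dotProduct_inv_mulVec_nonneg {ι : Type*} [Fintype ι] [DecidableEq ι]
    {A : Matrix ι ι ℝ} (hA : A.PosSemidef) (v : ι → ℝ) : 0 ≤ v ⬝ᵥ A⁻¹ *ᵥ v := by
  simpa using hA.inv.dotProduct_mulVec_nonneg v

theorem Real.min_one_le_two_mul_log_one_add {u : ℝ} (hu : 0 ≤ u) :
    min 1 u ≤ 2 * log (1 + u) := by
  have hlog := one_sub_inv_le_log_of_pos (show 0 < 1 + u by linarith)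
  have hmin : min 1 u ≤ 2 * u / (1 + u) := by
    rw [le_div_iff₀ (by linarith)]
    rcases le_total u 1 with h | h
    · rw [min_eq_right h]; nlinarith
    · rw [min_eq_left h]; linarith
  have : 2 * u / (1 + u) = 2 * (1 - (1 + u)⁻¹) := by field_simp; ring
  linarith

theorem Real.min_one_sqrt_le_sqrt_two_mul_log_one_add {u : ℝ} (hu : 0 ≤ u) :
    min 1 √u ≤ √(2 * log (1 + u)) := by
  calc min 1 √u = √(min 1 u) := by rw [sqrt_monotone.map_min, sqrt_one]
    _ ≤ √(2 * log (1 + u)) := sqrt_le_sqrt (min_one_le_two_mul_log_one_add hu)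

theorem Real.sum_sqrt_le_sqrt_card_mul_sum {ι : Type*} (s : Finset ι) {a : ι → ℝ}
    (ha : ∀ i, 0 ≤ a i) : ∑ i ∈ s, √(a i) ≤ √(#s * ∑ i ∈ s, a i) := by
  simpa [sqrt_mul (Nat.cast_nonneg _)] using
    sum_sqrt_mul_sqrt_le s (f := fun _ ↦ 1) (fun _ ↦ zero_le_one) ha

section GramMatrices

variable {ι : Type*} [Fintype ι] {V : ℕ → Matrix ι ι ℝ} {x : ℕ → ι → ℝ}

theorem posDef_of_add_vecMulVec (h0 : (V 0).PosDef)
    (hV : ∀ t, V (t + 1) = V t + vecMulVec (x t) (x t)) (t : ℕ) : (V t).PosDef := by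
  induction t with
  | zero => exact h0
  | succ t ih =>
    rw [hV]
    simpa using ih.add_posSemidef (posSemidef_vecMulVec_self_star (x t))

theorem sum_log_one_add_eq_log_det_sub_log_det [DecidableEq ι] (h0 : (V 0).PosDef)
    (hV : ∀ t, V (t + 1) = V t + vecMulVec (x t) (x t)) (n : ℕ) :
    ∑ t ∈ range n, log (1 + x t ⬝ᵥ (V t)⁻¹ *ᵥ x t)
      = log (V n).det - log (V 0).det := by
  induction n with
  | zero => simp
  | succ n ih =>
    have hpos := posDef_of_add_vecMulVec h0 hV n
    have hu := hpos.posSemidef.dotProduct_inv_mulVec_nonneg (x n)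
    rw [sum_range_succ, ih, hV, det_add_vecMulVec hpos.det_pos.ne'.isUnit,
      log_mul hpos.det_pos.ne' (by positivity)]
    ring

theorem trace_eq_trace_add_sum_dotProduct (hV : ∀ t, V (t + 1) = V t + vecMulVec (x t) (x t))
    (n : ℕ) : (V n).trace = (V 0).trace + ∑ t ∈ range n, x t ⬝ᵥ x t := by
  induction n with
  | zero => simp
  | succ n ih => rw [hV, trace_add, trace_vecMulVec, ih, sum_range_succ, add_assoc]

theorem sum_log_one_add_le_card_mul_log [DecidableEq ι] {γ L : ℝ} {n : ℕ} (hγ : 0 < γ)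
    (hV0 : V 0 = γ • 1) (hV : ∀ t, V (t + 1) = V t + vecMulVec (x t) (x t))
    (hL : ∀ t < n, x t ⬝ᵥ x t ≤ L ^ 2) :
    ∑ t ∈ range n, log (1 + x t ⬝ᵥ (V t)⁻¹ *ᵥ x t)
      ≤ Fintype.card ι * log (1 + n * L ^ 2 / (Fintype.card ι * γ)) := by
  set d := Fintype.card ι
  set c := n * L ^ 2 / (d * γ)
  have h0 : (V 0).PosDef := hV0 ▸ PosDef.one.smul hγ
  have hpos := posDef_of_add_vecMulVec h0 hV n
  have htrace : (V n).trace ≤ d * γ + n * L ^ 2 := by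
    rw [trace_eq_trace_add_sum_dotProduct hV, hV0, trace_smul, trace_one, smul_eq_mul, mul_comm]
    have := sum_le_sum fun t ht ↦ hL t (mem_range.1 ht)
    simp only [sum_const, card_range, nsmul_eq_mul] at this
    linarith
  have hc : 0 ≤ c := by positivity
  have hmean : (V n).trace / d ≤ γ * (1 + c) := by
    rcases Nat.eq_zero_or_pos d with hd | hd
    · simpa [hd] using mul_nonneg hγ.le (by linarith)
    · rw [div_le_iff₀ (by exact_mod_cast hd)]
      calc (V n).trace ≤ d * γ + n * L ^ 2 := htrace
        _ = γ * (1 + c) * d := by simp only [c]; field_simp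
  have hdet : (V n).det ≤ (γ * (1 + c)) ^ d :=
    hpos.posSemidef.det_le_trace_div_card_pow.trans
      (pow_le_pow_left₀ (div_nonneg hpos.posSemidef.trace_nonneg d.cast_nonneg) hmean d)
  rw [sum_log_one_add_eq_log_det_sub_log_det h0 hV, hV0, det_smul, det_one, mul_one]
  calc log (V n).det - log (γ ^ d) ≤ log ((γ * (1 + c)) ^ d) - log (γ ^ d) := by
        gcongr; exact hpos.det_pos
    _ = d * log (1 + c) := by
        rw [log_pow, log_pow, log_mul hγ.ne' (by positivity)]; ring

end GramMatrices

/-- Cumulative exploration-bonus bound: with `V_t = γ·I + Σ_{s<t} x_s x_sᵀ`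
and `‖x_t‖ ≤ L`,
`Σ_{t=1}^{n} min(1, √(x_tᵀ V_{t-1}⁻¹ x_t)) ≤ √(2 n d log(1 + nL²/(dγ)))`. -/
theorem sum_sqrt_exploration_bonus_bound {d n : ℕ} (γ L : ℝ) (hγ : 0 < γ)
    (x : ℕ → (Fin d → ℝ)) (hL : ∀ t < n, Real.sqrt (x t ⬝ᵥ x t) ≤ L)
    (V : ℕ → Matrix (Fin d) (Fin d) ℝ)
    (hV : ∀ t, V t = γ • (1 : Matrix (Fin d) (Fin d) ℝ)
        + ∑ s ∈ Finset.range t, vecMulVec (x s) (x s)) :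
    ∑ t ∈ Finset.range n, min 1 (Real.sqrt (x t ⬝ᵥ (V t)⁻¹ *ᵥ x t))
      ≤ Real.sqrt (2 * n * d * Real.log (1 + n * L ^ 2 / (d * γ))) := by
  have hV0 : V 0 = γ • 1 := by simpa using hV 0
  have hstep : ∀ t, V (t + 1) = V t + vecMulVec (x t) (x t) := fun t ↦ by
    rw [hV, hV, sum_range_succ, add_assoc]
  have hpos := posDef_of_add_vecMulVec (hV0 ▸ PosDef.one.smul hγ) hstep
  have hu t := (hpos t).posSemidef.dotProduct_inv_mulVec_nonneg (x t)
  have hpotential := sum_log_one_add_le_card_mul_log hγ hV0 hstep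
    fun t ht ↦ (sqrt_le_iff.1 (hL t ht)).2
  rw [Fintype.card_fin] at hpotential
  calc ∑ t ∈ range n, min 1 √(x t ⬝ᵥ (V t)⁻¹ *ᵥ x t)
      ≤ ∑ t ∈ range n, √(2 * log (1 + x t ⬝ᵥ (V t)⁻¹ *ᵥ x t)) :=
        sum_le_sum fun t _ ↦ min_one_sqrt_le_sqrt_two_mul_log_one_add (hu t)
    _ ≤ √(n * ∑ t ∈ range n, 2 * log (1 + x t ⬝ᵥ (V t)⁻¹ *ᵥ x t)) := by
        simpa using sum_sqrt_le_sqrt_card_mul_sum (range n)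
          fun t ↦ mul_nonneg zero_le_two (log_nonneg (by linarith [hu t]))
    _ ≤ √(2 * n * d * log (1 + n * L ^ 2 / (d * γ))) := by
        rw [← mul_sum]
        apply sqrt_le_sqrt
        nlinarith [n.cast_nonneg (α := ℝ)]
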